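/- Let v > 0. The Fréchet derivative of the map F ↦ ψ̂(F, v) at F = I (the 3×3 identity matrix) is the zero linear map if and only if v = v₀, where v₀ = (γ/λ)·(J₀^{−1/3} − J₀^{−1}) + J₀ − 1. In other words, the pre-swollen state F = I is stress-free exactly when the initial swelling volume fraction equals v₀. -/

import Mathlib

open Matrix Real

attribute [local instance] Matrix.frobeniusNormedAddCommGroup Matrix.frobeniusNormedSpace

noncomputable def entryCLM (i j : Fin 3) : Matrix (Fin 3) (Fin 3) ℝ →L[ℝ] ℝ :=
  LinearMap.toContinuousLinearMap
    { toFun := fun G => G i j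
      map_add' := fun _ _ => rfl
      map_smul' := fun _ _ => rfl }

@[simp] lemma entryCLM_apply (i j : Fin 3) (G : Matrix (Fin 3) (Fin 3) ℝ) :
    entryCLM i j G = G i j := rfl

noncomputable def trCLM : Matrix (Fin 3) (Fin 3) ℝ →L[ℝ] ℝ :=
  entryCLM 0 0 + entryCLM 1 1 + entryCLM 2 2

@[simp] lemma trCLM_apply (G : Matrix (Fin 3) (Fin 3) ℝ) :
    trCLM G = G 0 0 + G 1 1 + G 2 2 := rfl

lemma hasFDerivAt_entry (i j : Fin 3) (x : Matrix (Fin 3) (Fin 3) ℝ) :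
    HasFDerivAt (fun G : Matrix (Fin 3) (Fin 3) ℝ => G i j) (entryCLM i j) x :=
  (entryCLM i j).hasFDerivAt

noncomputable def Tfun (G : Matrix (Fin 3) (Fin 3) ℝ) : ℝ :=
  G 0 0 * G 0 0 + G 0 1 * G 0 1 + G 0 2 * G 0 2 +
  G 1 0 * G 1 0 + G 1 1 * G 1 1 + G 1 2 * G 1 2 +
  G 2 0 * G 2 0 + G 2 1 * G 2 1 + G 2 2 * G 2 2

noncomputable def Dfun (G : Matrix (Fin 3) (Fin 3) ℝ) : ℝ :=
  G 0 0 * G 1 1 * G 2 2 - G 0 0 * G 1 2 * G 2 1 - G 0 1 * G 1 0 * G 2 2 +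
  G 0 1 * G 1 2 * G 2 0 + G 0 2 * G 1 0 * G 2 1 - G 0 2 * G 1 1 * G 2 0

@[simp] lemma Dfun_one : Dfun 1 = 1 := by
  simp [Dfun, Matrix.one_apply]

lemma hasFDerivAt_T : HasFDerivAt Tfun ((2:ℝ) • trCLM) 1 := by
  have h : ∀ i j : Fin 3, HasFDerivAt (fun G : Matrix (Fin 3) (Fin 3) ℝ => G i j)
      (entryCLM i j) 1 := fun i j => hasFDerivAt_entry i j 1
  have big := (((((((((h 0 0).mul (h 0 0)).add ((h 0 1).mul (h 0 1))).add
      ((h 0 2).mul (h 0 2))).add ((h 1 0).mul (h 1 0))).add ((h 1 1).mul (h 1 1))).add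
      ((h 1 2).mul (h 1 2))).add ((h 2 0).mul (h 2 0))).add ((h 2 1).mul (h 2 1))).add
      ((h 2 2).mul (h 2 2))
  refine big.congr_fderiv ?_
  ext H
  show _ = (2:ℝ) * (H 0 0 + H 1 1 + H 2 2)
  simp [trCLM, Matrix.one_apply, HSMul.hSMul, SMul.smul, ContinuousLinearMap.coe_mk']
  ring

lemma hasFDerivAt_D : HasFDerivAt Dfun trCLM 1 := by
  have h : ∀ i j : Fin 3, HasFDerivAt (fun G : Matrix (Fin 3) (Fin 3) ℝ => G i j)
      (entryCLM i j) 1 := fun i j => hasFDerivAt_entry i j 1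
  have t1 := ((h 0 0).mul (h 1 1)).mul (h 2 2)
  have t2 := ((h 0 0).mul (h 1 2)).mul (h 2 1)
  have t3 := ((h 0 1).mul (h 1 0)).mul (h 2 2)
  have t4 := ((h 0 1).mul (h 1 2)).mul (h 2 0)
  have t5 := ((h 0 2).mul (h 1 0)).mul (h 2 1)
  have t6 := ((h 0 2).mul (h 1 1)).mul (h 2 0)
  have big := ((((t1.sub t2).sub t3).add t4).add t5).sub t6
  refine big.congr_fderiv ?_
  ext H
  show _ = H 0 0 + H 1 1 + H 2 2
  simp [trCLM, Matrix.one_apply, HSMul.hSMul, SMul.smul, ContinuousLinearMap.coe_mk']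
  ring

lemma main_deriv (γ lam J₀ v K : ℝ) (hJ₀ : 0 < J₀) :
    HasFDerivAt (fun G => γ/(2*J₀) * (J₀ ^ ((2:ℝ)/3) * Tfun G - 3 - 2 * Real.log (Dfun G * J₀))
      + lam/(2*J₀) * ((Dfun G * J₀ - 1 - v) * (Dfun G * J₀ - 1 - v)) + K)
      ((γ/J₀ * (J₀ ^ ((2:ℝ)/3) - 1) + lam * (J₀ - 1 - v)) • trCLM) 1 := by
  have hT := hasFDerivAt_T
  have hD := hasFDerivAt_D
  have hDJ := hD.mul_const J₀
  have hne : Dfun 1 * J₀ ≠ 0 := by simp [hJ₀.ne']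
  have hlog := hDJ.log hne
  have hs := (hDJ.sub_const 1).sub_const v
  have hsq := hs.mul hs
  have hinner := ((hT.const_mul (J₀ ^ ((2:ℝ)/3))).sub_const 3).sub (hlog.const_mul 2)
  have hfull := ((hinner.const_mul (γ/(2*J₀))).add (hsq.const_mul (lam/(2*J₀)))).add_const K
  refine hfull.congr_fderiv ?_
  ext H
  show _ = (γ/J₀ * (J₀ ^ ((2:ℝ)/3) - 1) + lam * (J₀ - 1 - v)) * (H 0 0 + H 1 1 + H 2 2)
  simp [trCLM, HSMul.hSMul, SMul.smul, ContinuousLinearMap.coe_mk']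
  field_simp
  ring

/-- For `v > 0`, the Fréchet derivative of `F ↦ ψ̂(F, v)` at the identity matrix `F = I`
is the zero linear map if and only if `v = v₀ = (γ/λ)·(J₀^(-1/3) − J₀⁻¹) + J₀ − 1`, i.e.,
the pre-swollen state is stress-free exactly at the initial swelling volume fraction `v₀`. -/
theorem free_energy_stress_free_iff
    (γ α χ lam J₀ : ℝ) (hγ : 0 < γ) (hα : 0 < α) (hχ : 0 < χ) (hlam : 0 < lam)
    (hJ₀ : 0 < J₀)
    (ψ : Matrix (Fin 3) (Fin 3) ℝ → ℝ → ℝ)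
    (hψ : ∀ F v, ψ F v =
      γ / (2 * J₀) * (J₀ ^ ((2 : ℝ) / 3) * (Fᵀ * F).trace - 3 - 2 * Real.log (F.det * J₀))
      + lam / (2 * J₀) * (F.det * J₀ - 1 - v) ^ 2
      + α / J₀ * (v * Real.log (v / (1 + v)) + χ * v / (1 + v)))
    (v : ℝ) (hv : 0 < v) :
    HasFDerivAt (fun G => ψ G v) (0 : Matrix (Fin 3) (Fin 3) ℝ →L[ℝ] ℝ)
        (1 : Matrix (Fin 3) (Fin 3) ℝ) ↔
      v = γ / lam * (J₀ ^ (-(1 : ℝ) / 3) - J₀⁻¹) + J₀ - 1 := by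
  set K : ℝ := α / J₀ * (v * Real.log (v / (1 + v)) + χ * v / (1 + v)) with hK
  have hfun : (fun G => ψ G v) =
      (fun G => γ/(2*J₀) * (J₀ ^ ((2:ℝ)/3) * Tfun G - 3 - 2 * Real.log (Dfun G * J₀))
        + lam/(2*J₀) * ((Dfun G * J₀ - 1 - v) * (Dfun G * J₀ - 1 - v)) + K) := by
    funext G
    rw [hψ G v, hK]
    simp only [Tfun, Dfun, Matrix.det_fin_three, Matrix.trace_fin_three, Matrix.mul_apply,
      Matrix.transpose_apply, Fin.sum_univ_three]
    ring
  have key : HasFDerivAt (fun G => ψ G v)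
      ((γ/J₀ * (J₀ ^ ((2:ℝ)/3) - 1) + lam * (J₀ - 1 - v)) • trCLM) 1 := by
    rw [hfun]; exact main_deriv γ lam J₀ v K hJ₀
  have hA : J₀ ^ (-(1:ℝ)/3) * J₀ = J₀ ^ ((2:ℝ)/3) := by
    calc J₀ ^ (-(1:ℝ)/3) * J₀ = J₀ ^ (-(1:ℝ)/3) * J₀ ^ (1:ℝ) := by rw [Real.rpow_one]
    _ = J₀ ^ (-(1:ℝ)/3 + 1) := (Real.rpow_add hJ₀ _ _).symm
    _ = J₀ ^ ((2:ℝ)/3) := by norm_num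
  have hv0 : γ / lam * (J₀ ^ (-(1:ℝ)/3) - J₀⁻¹) + J₀ - 1
      = γ / (lam * J₀) * (J₀ ^ ((2:ℝ)/3) - 1) + J₀ - 1 := by
    rw [← hA]; field_simp
  have hiff : (γ/J₀ * (J₀ ^ ((2:ℝ)/3) - 1) + lam * (J₀ - 1 - v) = 0) ↔
      v = γ / lam * (J₀ ^ (-(1:ℝ)/3) - J₀⁻¹) + J₀ - 1 := by
    rw [hv0]
    constructor
    · intro h
      field_simp at h ⊢
      nlinarith [h]
    · intro h
      rw [h]
      field_simp
      ring
  constructor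
  · intro h0
    have hz := key.unique h0
    have h3 := congrFun (congrArg DFunLike.coe hz) 1
    simp [trCLM, Matrix.one_apply] at h3
    have hk : γ/J₀ * (J₀ ^ ((2:ℝ)/3) - 1) + lam * (J₀ - 1 - v) = 0 := by linarith
    exact hiff.mp hk
  · intro hveq
    have hk0 := hiff.mpr hveq
    rw [hk0, zero_smul] at key
    exact key
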